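/- For all real x, erf(x)² < 1 − exp(−4x²/π) when x ≠ 0; equivalently 1 − erf(x)² > exp(−4x²/π). -/

import Mathlib

/-!
With `G x = ∫₀ˣ e^{-t²} dt`, differentiation under the integral sign shows that
`Q x = ∫₀¹ e^{-x²(1+t²)} / (1+t²) dt` satisfies `Q' = -2 G G'`; since `Q 0 = arctan 1 = π/4`,
this gives `Q + G² = π/4`, i.e. `1 - erf² x = (4/π) Q x`. Under the probability density
`(4/π) / (1+t²)` on `[0,1]` the exponent `-x²(1+t²)` has mean `-4x²/π`, so Jensen's inequality
for `exp`, strict because the exponent is not constant when `x ≠ 0`, gives `(4/π) Q x > e^{-4x²/π}`.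
-/

open Real Set MeasureTheory intervalIntegral

/-- The Gauss error function `erf x = (2/√π) ∫₀ˣ e^{-t²} dt`. -/
noncomputable def erf (x : ℝ) : ℝ :=
  (2 / Real.sqrt Real.pi) * ∫ t in (0 : ℝ)..x, Real.exp (-t ^ 2)

theorem exp_mean_mul_integral_lt_integral_mul_exp {a b c : ℝ} {w u : ℝ → ℝ} (hab : a < b)
    (hw : ContinuousOn w (Icc a b)) (hu : ContinuousOn u (Icc a b))
    (hw_pos : ∀ t ∈ Icc a b, 0 < w t)
    (hc : ∫ t in a..b, w t * u t = c * ∫ t in a..b, w t) (hne : ∃ t ∈ Icc a b, u t ≠ c) :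
    exp c * ∫ t in a..b, w t < ∫ t in a..b, w t * exp (u t) := by
  have tangent : ∀ t ∈ Icc a b, exp c * (w t + (w t * u t - c * w t)) ≤ w t * exp (u t) ∧
      (u t ≠ c → exp c * (w t + (w t * u t - c * w t)) < w t * exp (u t)) := by
    intro t ht
    -- `w e^u ≥ w e^c (1 + (u - c))`, strictly when `u ≠ c`
    have key : exp c * (w t + (w t * u t - c * w t)) = w t * (exp c * (u t - c + 1)) := by ring
    have hexp : exp (u t) = exp c * exp (u t - c) := by rw [← exp_add]; ring_nf
    rw [key, hexp]
    refine ⟨?_, fun h => ?_⟩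
    · gcongr
      exacts [(hw_pos t ht).le, add_one_le_exp _]
    · gcongr
      exacts [hw_pos t ht, add_one_lt_exp (sub_ne_zero.2 h)]
  have hwi : IntervalIntegrable w volume a b := hw.intervalIntegrable_of_Icc hab.le
  have hwui : IntervalIntegrable (fun t => w t * u t) volume a b :=
    (hw.mul hu).intervalIntegrable_of_Icc hab.le
  calc exp c * ∫ t in a..b, w t
      = ∫ t in a..b, exp c * (w t + (w t * u t - c * w t)) := by
        rw [intervalIntegral.integral_const_mul, integral_add hwi (hwui.sub (hwi.const_mul c)),
          integral_sub hwui (hwi.const_mul c), intervalIntegral.integral_const_mul, hc, sub_self,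
          add_zero]
    _ < ∫ t in a..b, w t * exp (u t) := by
        refine integral_lt_integral_of_continuousOn_of_le_of_exists_lt hab (by fun_prop)
          (hw.mul (continuous_exp.comp_continuousOn hu))
          (fun t ht => (tangent t (Ioc_subset_Icc_self ht)).1) ?_
        obtain ⟨t, ht, hut⟩ := hne
        exact ⟨t, ht, (tangent t ht).2 hut⟩

/-- Owen's T-function up to normalisation: `owenIntegral x = 2π T(√2 x, 1)`. -/
noncomputable def owenIntegral (x : ℝ) : ℝ :=
  ∫ t in (0 : ℝ)..1, exp (-x ^ 2 * (1 + t ^ 2)) / (1 + t ^ 2)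

theorem hasDerivAt_owenIntegral (x : ℝ) :
    HasDerivAt owenIntegral (∫ t in (0 : ℝ)..1, -2 * x * exp (-x ^ 2 * (1 + t ^ 2))) x := by
  have hF : ∀ y, Continuous fun t : ℝ => exp (-y ^ 2 * (1 + t ^ 2)) / (1 + t ^ 2) := fun y =>
    .div (by fun_prop) (by fun_prop) fun t => by positivity
  refine (hasDerivAt_integral_of_dominated_loc_of_deriv_le
    (F' := fun y t => -2 * y * exp (-y ^ 2 * (1 + t ^ 2))) (bound := fun _ => 2 * (|x| + 1))
    (Metric.ball_mem_nhds x one_pos) (.of_forall fun y => (hF y).aestronglyMeasurable)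
    ((hF x).intervalIntegrable _ _) (by fun_prop : Continuous _).aestronglyMeasurable ?_
    intervalIntegrable_const ?_).2
  · refine .of_forall fun t _ y hy => ?_
    have hy' : |y| ≤ |x| + 1 := by
      have := abs_sub_abs_le_abs_sub y x
      rw [← Real.dist_eq] at this
      linarith [Metric.mem_ball.1 hy]
    have hexp : exp (-y ^ 2 * (1 + t ^ 2)) ≤ 1 :=
      exp_le_one_iff.2 (by nlinarith [sq_nonneg y, sq_nonneg t])
    rw [norm_mul, norm_mul, norm_neg, Real.norm_two, Real.norm_of_nonneg (exp_pos _).le,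
      Real.norm_eq_abs]
    nlinarith [abs_nonneg y, exp_pos (-y ^ 2 * (1 + t ^ 2))]
  · refine .of_forall fun t _ y _ => ?_
    have h1t : (1 + t ^ 2) ≠ 0 := by positivity
    have hexponent : HasDerivAt (fun y : ℝ => -y ^ 2 * (1 + t ^ 2)) (-2 * y * (1 + t ^ 2)) y := by
      simpa using (hasDerivAt_pow 2 y).neg.mul_const (1 + t ^ 2)
    refine (hexponent.exp.div_const (1 + t ^ 2)).congr_deriv ?_
    field_simp

theorem mul_integral_exp_neg_sq_mul_one_add_sq (x : ℝ) :
    x * ∫ t in (0 : ℝ)..1, exp (-x ^ 2 * (1 + t ^ 2)) =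
      exp (-x ^ 2) * ∫ t in (0 : ℝ)..x, exp (-t ^ 2) := by
  have hsplit : ∀ t : ℝ, exp (-x ^ 2 * (1 + t ^ 2)) = exp (-x ^ 2) * exp (-(x * t) ^ 2) := by
    intro t; rw [← exp_add]; ring_nf
  have hsubst := mul_integral_comp_mul_left (a := 0) (b := 1) (c := x) (f := fun u => exp (-u ^ 2))
  simp only [mul_zero, mul_one] at hsubst
  simp_rw [hsplit, intervalIntegral.integral_const_mul, mul_left_comm x, hsubst]

theorem owenIntegral_add_sq_integral_gaussian (x : ℝ) :
    owenIntegral x + (∫ t in (0 : ℝ)..x, exp (-t ^ 2)) ^ 2 = π / 4 := by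
  set G : ℝ → ℝ := fun y => ∫ t in (0 : ℝ)..y, exp (-t ^ 2)
  have hG : ∀ y, HasDerivAt G (exp (-y ^ 2)) y := fun y =>
    ((by fun_prop : Continuous fun t : ℝ => exp (-t ^ 2)).integral_hasStrictDerivAt 0 y).hasDerivAt
  have hderiv : ∀ y, HasDerivAt (fun y => owenIntegral y + G y ^ 2) 0 y := by
    intro y
    have hint :
        ∫ t in (0 : ℝ)..1, -2 * y * exp (-y ^ 2 * (1 + t ^ 2)) = -2 * exp (-y ^ 2) * G y := by
      rw [intervalIntegral.integral_const_mul, mul_assoc, mul_integral_exp_neg_sq_mul_one_add_sq,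
        mul_assoc]
    refine ((hasDerivAt_owenIntegral y).add ((hG y).pow 2)).congr_deriv ?_
    rw [hint]; ring
  have h0 : owenIntegral 0 + G 0 ^ 2 = π / 4 := by
    simp [owenIntegral, G]
  rw [← h0]
  exact is_const_of_deriv_eq_zero (fun y => (hderiv y).differentiableAt)
    (fun y => (hderiv y).deriv) x 0

theorem one_sub_erf_sq (x : ℝ) : 1 - erf x ^ 2 = 4 / π * owenIntegral x := by
  have h := owenIntegral_add_sq_integral_gaussian x
  rw [erf, mul_pow, div_pow, sq_sqrt pi_pos.le]
  field_simp
  linarith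

theorem mul_exp_lt_owenIntegral {x : ℝ} (hx : x ≠ 0) :
    π / 4 * exp (-4 * x ^ 2 / π) < owenIntegral x := by
  have hweight : ∫ t in (0 : ℝ)..1, (1 + t ^ 2)⁻¹ = π / 4 := by simp
  have hmean : ∫ t in (0 : ℝ)..1, (1 + t ^ 2)⁻¹ * (-x ^ 2 * (1 + t ^ 2))
      = -4 * x ^ 2 / π * ∫ t in (0 : ℝ)..1, (1 + t ^ 2)⁻¹ := by
    have h : ∀ t : ℝ, (1 + t ^ 2)⁻¹ * (-x ^ 2 * (1 + t ^ 2)) = -x ^ 2 := fun t => by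
      field_simp
    simp_rw [h, hweight]
    field_simp
    simp
  have hne : -x ^ 2 * (1 + 0 ^ 2) ≠ -4 * x ^ 2 / π := by
    have : 0 < x ^ 2 := by positivity
    rw [ne_eq, eq_div_iff pi_ne_zero]
    nlinarith [pi_lt_four]
  have := exp_mean_mul_integral_lt_integral_mul_exp (w := fun t => (1 + t ^ 2)⁻¹)
    (u := fun t => -x ^ 2 * (1 + t ^ 2)) zero_lt_one
    ((Continuous.inv₀ (by fun_prop) fun t => by positivity).continuousOn) (by fun_prop)
    (fun t _ => by positivity) hmean ⟨0, by simp, hne⟩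
  rw [hweight, mul_comm] at this
  simpa only [owenIntegral, div_eq_inv_mul] using this

theorem stmt_8 (x : ℝ) (hx : x ≠ 0) :
    erf x ^ 2 < 1 - Real.exp (-4 * x ^ 2 / Real.pi) := by
  rw [lt_sub_comm, one_sub_erf_sq]
  calc exp (-4 * x ^ 2 / π) = 4 / π * (π / 4 * exp (-4 * x ^ 2 / π)) := by field_simp
    _ < 4 / π * owenIntegral x := by gcongr; exact mul_exp_lt_owenIntegral hx
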